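/- arXiv:1203.3255 — 2 statements merged into one kernel-verified Lean document; each statement's English description precedes it below -/
import Mathlib

section
/- Let T > 0, let u1, u2 : [0,T] → [0,1] be continuous controls, and let (S, L1, I, L2, R) : [0,T] → ℝ⁵ be a differentiable solution of the TB control system with controls u1, u2 whose initial values S(0), L1(0), I(0), L2(0), R(0) are all nonnegative and satisfy S(0) + L1(0) + I(0) + L2(0) + R(0) = N. Then for every t ∈ [0,T], each of S(t), L1(t), I(t), L2(t), R(t) lies in the interval [0, N]. -/
/-!
When a component xᵢ of the solution is nonpositive, its derivative is bounded below by
`-Kᵢ · g`, where `g = Σ xⱼ⁻` is the total negative mass and `Kᵢ` depends on an a priori bound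
for the (continuous, hence bounded) solution on `[0, T]`. So `g`, which vanishes at `0`, has
right Dini derivative at most `(Σ Kᵢ) g`, and Grönwall's inequality forces `g ≡ 0`: all
components stay nonnegative. Adding the five equations, `W = S + L1 + I + L2 + R - N` solves
`W' = -μ W` with `W 0 = 0`, so `W ≡ 0` and each nonnegative component is at most `N`.
-/

open Set Filter Topology

theorem eventually_slope_negPart_le {f : ℝ → ℝ} {f' x ε : ℝ}
    (hf : HasDerivWithinAt f f' (Ici x) x) (hε : 0 < ε) :
    ∀ᶠ z in 𝓝[>] x,
      (z - x)⁻¹ * ((f z)⁻ - (f x)⁻) ≤ (if f x ≤ 0 then (-f')⁺ else 0) + ε := by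
  split_ifs with hfx
  · have hslope : ∀ᶠ z in 𝓝[>] x, f' - ε < slope f x z :=
      ((hasDerivWithinAt_iff_tendsto_slope' self_notMem_Ioi).1 hf.Ioi_of_Ici).eventually
        (eventually_gt_nhds (by linarith))
    filter_upwards [hslope, self_mem_nhdsWithin] with z hz (hxz : x < z)
    have hzx : 0 < z - x := sub_pos.2 hxz
    rw [slope_def_field, lt_div_iff₀ hzx] at hz
    rw [inv_mul_le_iff₀ hzx, negPart_eq_neg.2 hfx, negPart_def]
    have := mul_le_mul_of_nonneg_right (le_posPart (-f')) hzx.le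
    rcases le_total (f z) 0 with hz0 | hz0
    · rw [max_eq_left (by linarith)]; nlinarith
    · rw [max_eq_right (by linarith)]; nlinarith [posPart_nonneg (-f')]
  · have hpos : ∀ᶠ z in 𝓝[>] x, 0 < f z :=
      (hf.continuousWithinAt.mono Ioi_subset_Ici_self).eventually
        (eventually_gt_nhds (not_le.1 hfx))
    filter_upwards [hpos] with z hz
    simp [negPart_of_nonneg hz.le, negPart_of_nonneg (not_le.1 hfx).le, hε.le]

theorem nonneg_of_quasipositive {ι : Type*} [Fintype ι] {f f' : ι → ℝ → ℝ} {K : ι → ℝ} {a b : ℝ}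
    (hf : ∀ i, ∀ x ∈ Icc a b, HasDerivWithinAt (f i) (f' i x) (Icc a b) x)
    (hquasi : ∀ i, ∀ x ∈ Ico a b, f i x ≤ 0 → -f' i x ≤ K i * ∑ j, (f j x)⁻)
    (ha : ∀ i, 0 ≤ f i a) :
    ∀ x ∈ Icc a b, ∀ i, 0 ≤ f i x := by
  set g : ℝ → ℝ := fun x => ∑ j, (f j x)⁻
  set C := ∑ i, max (K i) 0
  have hg : ContinuousOn g (Icc a b) := continuousOn_finsetSum _ fun i _ =>
    continuous_negPart.comp_continuousOn fun x hx => (hf i x hx).continuousWithinAt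
  have hdini : ∀ x ∈ Ico a b, ∀ r, C * g x < r →
      ∃ᶠ z in 𝓝[>] x, (z - x)⁻¹ * (g z - g x) < r := by
    intro x hx r hr
    have hterm : ∀ i, (if f i x ≤ 0 then (-f' i x)⁺ else 0) ≤ max (K i) 0 * g x := by
      intro i
      have hC : 0 ≤ max (K i) 0 * g x := mul_nonneg (le_max_right _ _)
        (Finset.sum_nonneg fun j _ => negPart_nonneg _)
      split_ifs with hi
      · exact max_le ((hquasi i x hx hi).trans (mul_le_mul_of_nonneg_right (le_max_left _ _)
          (Finset.sum_nonneg fun j _ => negPart_nonneg _))) hC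
      · exact hC
    set ε := (r - C * g x) / (Fintype.card ι + 1)
    have hε : 0 < ε := div_pos (by linarith) (by positivity)
    have hev := eventually_all.2 fun i => eventually_slope_negPart_le
      ((hf i x (Ico_subset_Icc_self hx)).mono_of_mem_nhdsWithin (Icc_mem_nhdsGE_of_mem hx)) hε
    refine hev.frequently.mono fun z hz => ?_
    calc (z - x)⁻¹ * (g z - g x) = ∑ i, (z - x)⁻¹ * ((f i z)⁻ - (f i x)⁻) := by
          simp only [g, ← Finset.sum_sub_distrib, Finset.mul_sum]
      _ ≤ ∑ i, (max (K i) 0 * g x + ε) := Finset.sum_le_sum fun i _ =>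
          (hz i).trans (add_le_add_left (hterm i) ε)
      _ = C * g x + Fintype.card ι * ε := by
          simp [C, Finset.sum_add_distrib, Finset.sum_mul]
      _ < r := by
          have : (Fintype.card ι + 1) * ε = r - C * g x := mul_div_cancel₀ _ (by positivity)
          linarith
  have hg0 : g a ≤ 0 := by simp [g, negPart_of_nonneg (ha _)]
  intro x hx i
  have hgx : g x ≤ 0 := by
    simpa [gronwallBound_ε0_δ0] using le_gronwallBound_of_liminf_deriv_right_le (ε := 0)
      hg hdini hg0 (fun y _ => (add_zero _).ge) x hx
  have hfx : (f i x)⁻ ≤ g x :=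
    Finset.single_le_sum (fun j _ => negPart_nonneg (f j x)) (Finset.mem_univ i)
  exact negPart_eq_zero.1 (le_antisymm (hfx.trans hgx) (negPart_nonneg _))

theorem eq_zero_of_hasDerivWithinAt_const_mul {W : ℝ → ℝ} {c a b : ℝ}
    (hW : ∀ x ∈ Icc a b, HasDerivWithinAt W (c * W x) (Icc a b) x) (ha : W a = 0) :
    ∀ x ∈ Icc a b, W x = 0 := by
  intro x hx
  simpa [gronwallBound_ε0_δ0] using norm_le_gronwallBound_of_norm_deriv_right_le
    (δ := 0) (K := |c|) (ε := 0) (fun y hy => (hW y hy).continuousWithinAt)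
    (fun y hy => (hW y (Ico_subset_Icc_self hy)).mono_of_mem_nhdsWithin
      (Icc_mem_nhdsGE_of_mem hy))
    (by simp [ha]) (fun y _ => by simp) x hx

theorem neg_mul_le_of_abs_le {a b M : ℝ} (ha : |a| ≤ M) (hb : |b| ≤ M) :
    -(a * b) ≤ M * (a⁻ + b⁻) := by
  rw [abs_le] at ha hb
  rcases le_total a 0 with ha0 | ha0 <;> rcases le_total b 0 with hb0 | hb0 <;>
    simp only [negPart_eq_neg.2, negPart_of_nonneg, *] <;> nlinarith

theorem mul_le_of_abs_le_of_nonpos {a b M : ℝ} (ha : |a| ≤ M) (hb : b ≤ 0) :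
    a * b ≤ M * b⁻ := by
  rw [negPart_eq_neg.2 hb]
  nlinarith [abs_le.1 ha]

section TBEstimates

variable {μ β δ ω ωR σ σR τ0 τ1 τ2 N ε1 ε2 φ M u1 u2 s l1 i l2 r : ℝ}

theorem tb_quasipositive_S (hμ : 0 ≤ μ) (hβ : 0 ≤ β) (hN : 0 ≤ N) (hi : |i| ≤ M)
    (hs : s ≤ 0) :
    -(μ * N - β / N * i * s - μ * s) ≤ β / N * M * (s⁻ + l1⁻ + i⁻ + l2⁻ + r⁻) := by
  have hb : 0 ≤ β / N * M := mul_nonneg (div_nonneg hβ hN) ((abs_nonneg i).trans hi)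
  nlinarith [mul_le_mul_of_nonneg_left (mul_le_of_abs_le_of_nonpos hi hs) (div_nonneg hβ hN),
    mul_nonneg hμ hN, mul_nonneg hb (negPart_nonneg l1), mul_nonneg hb (negPart_nonneg i),
    mul_nonneg hb (negPart_nonneg l2), mul_nonneg hb (negPart_nonneg r)]

theorem tb_quasipositive_L1 (hμ : 0 ≤ μ) (hβ : 0 ≤ β) (hδ : 0 ≤ δ) (hσ : 0 ≤ σ)
    (hσR : 0 ≤ σR) (hτ1 : 0 ≤ τ1) (hN : 0 ≤ N) (hs : |s| ≤ M) (hi : |i| ≤ M) (hl2 : |l2| ≤ M)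
    (hr : |r| ≤ M) (hl1 : l1 ≤ 0) :
    -(β / N * i * (s + σ * l2 + σR * r) - (δ + τ1 + μ) * l1) ≤
      β / N * M * (1 + σ + σR) * (s⁻ + l1⁻ + i⁻ + l2⁻ + r⁻) := by
  set g := s⁻ + l1⁻ + i⁻ + l2⁻ + r⁻
  have := negPart_nonneg s; have := negPart_nonneg l1; have := negPart_nonneg i
  have := negPart_nonneg l2; have := negPart_nonneg r
  have hb : 0 ≤ β / N := div_nonneg hβ hN
  have hM : 0 ≤ M := (abs_nonneg i).trans hi
  have hIS : -(i * s) ≤ M * g :=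
    (neg_mul_le_of_abs_le hi hs).trans (mul_le_mul_of_nonneg_left (by linarith) hM)
  have hIL2 : -(i * l2) ≤ M * g :=
    (neg_mul_le_of_abs_le hi hl2).trans (mul_le_mul_of_nonneg_left (by linarith) hM)
  have hIR : -(i * r) ≤ M * g :=
    (neg_mul_le_of_abs_le hi hr).trans (mul_le_mul_of_nonneg_left (by linarith) hM)
  have hL1 : (δ + τ1 + μ) * l1 ≤ 0 := mul_nonpos_of_nonneg_of_nonpos (by positivity) hl1
  nlinarith [mul_le_mul_of_nonneg_left hIS hb, mul_le_mul_of_nonneg_left hIL2 (mul_nonneg hb hσ),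
    mul_le_mul_of_nonneg_left hIR (mul_nonneg hb hσR)]

theorem tb_quasipositive_I (hμ : 0 ≤ μ) (hδ : 0 ≤ δ) (hω : 0 ≤ ω) (hωR : 0 ≤ ωR)
    (hτ0 : 0 ≤ τ0) (hε1 : 0 ≤ ε1) (hφ : 0 ≤ φ) (hu1 : 0 ≤ u1) (hi : i ≤ 0) :
    -(φ * δ * l1 + ω * l2 + ωR * r - (τ0 + ε1 * u1 + μ) * i) ≤
      (φ * δ + ω + ωR) * (s⁻ + l1⁻ + i⁻ + l2⁻ + r⁻) := by
  nlinarith [neg_le_negPart l1, neg_le_negPart l2, neg_le_negPart r, negPart_nonneg s,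
    negPart_nonneg l1, negPart_nonneg i, negPart_nonneg l2, negPart_nonneg r,
    mul_nonneg hφ hδ, mul_nonneg hε1 hu1]

theorem tb_quasipositive_L2 (hμ : 0 ≤ μ) (hβ : 0 ≤ β) (hδ : 0 ≤ δ) (hω : 0 ≤ ω)
    (hσ : 0 ≤ σ) (hτ2 : 0 ≤ τ2) (hN : 0 ≤ N) (hε2 : 0 ≤ ε2) (hφ : φ ≤ 1) (hu2 : 0 ≤ u2)
    (hi : |i| ≤ M) (hl2 : l2 ≤ 0) :
    -((1 - φ) * δ * l1 - σ * (β / N) * i * l2 - (ω + ε2 * u2 + τ2 + μ) * l2) ≤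
      ((1 - φ) * δ + σ * (β / N) * M) * (s⁻ + l1⁻ + i⁻ + l2⁻ + r⁻) := by
  set g := s⁻ + l1⁻ + i⁻ + l2⁻ + r⁻
  have := negPart_nonneg s; have := negPart_nonneg l1; have := negPart_nonneg i
  have := negPart_nonneg l2; have := negPart_nonneg r
  have hb : 0 ≤ σ * (β / N) := mul_nonneg hσ (div_nonneg hβ hN)
  have hL1 : (1 - φ) * δ * -l1 ≤ (1 - φ) * δ * g :=
    mul_le_mul_of_nonneg_left (by linarith [neg_le_negPart l1]) (by nlinarith)
  have hIL2 : i * l2 ≤ M * g := (mul_le_of_abs_le_of_nonpos hi hl2).trans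
    (mul_le_mul_of_nonneg_left (by linarith) ((abs_nonneg i).trans hi))
  have hL2 : (ω + ε2 * u2 + τ2 + μ) * l2 ≤ 0 :=
    mul_nonpos_of_nonneg_of_nonpos (by positivity) hl2
  nlinarith [mul_le_mul_of_nonneg_left hIL2 hb]

theorem tb_quasipositive_R (hμ : 0 ≤ μ) (hβ : 0 ≤ β) (hωR : 0 ≤ ωR) (hσR : 0 ≤ σR)
    (hτ0 : 0 ≤ τ0) (hτ1 : 0 ≤ τ1) (hτ2 : 0 ≤ τ2) (hN : 0 ≤ N) (hε1 : 0 ≤ ε1) (hε2 : 0 ≤ ε2)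
    (hu1 : u1 ∈ Icc (0 : ℝ) 1) (hu2 : u2 ∈ Icc (0 : ℝ) 1) (hi : |i| ≤ M) (hr : r ≤ 0) :
    -((τ0 + ε1 * u1) * i + τ1 * l1 + (τ2 + ε2 * u2) * l2 - σR * (β / N) * i * r
      - (ωR + μ) * r) ≤
      (τ0 + ε1 + τ1 + τ2 + ε2 + σR * (β / N) * M) * (s⁻ + l1⁻ + i⁻ + l2⁻ + r⁻) := by
  set g := s⁻ + l1⁻ + i⁻ + l2⁻ + r⁻
  have := negPart_nonneg s; have := negPart_nonneg l1; have := negPart_nonneg i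
  have := negPart_nonneg l2; have := negPart_nonneg r
  have hb : 0 ≤ σR * (β / N) := mul_nonneg hσR (div_nonneg hβ hN)
  have hI : (τ0 + ε1 * u1) * -i ≤ (τ0 + ε1) * g := by
    nlinarith [neg_le_negPart i, mul_le_mul_of_nonneg_left hu1.2 hε1, mul_nonneg hε1 hu1.1]
  have hL1 : τ1 * -l1 ≤ τ1 * g :=
    mul_le_mul_of_nonneg_left (by linarith [neg_le_negPart l1]) hτ1
  have hL2 : (τ2 + ε2 * u2) * -l2 ≤ (τ2 + ε2) * g := by
    nlinarith [neg_le_negPart l2, mul_le_mul_of_nonneg_left hu2.2 hε2, mul_nonneg hε2 hu2.1]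
  have hIR : i * r ≤ M * g := (mul_le_of_abs_le_of_nonpos hi hr).trans
    (mul_le_mul_of_nonneg_left (by linarith) ((abs_nonneg i).trans hi))
  have hR : (ωR + μ) * r ≤ 0 := mul_nonpos_of_nonneg_of_nonpos (by positivity) hr
  nlinarith [mul_le_mul_of_nonneg_left hIR hb]

end TBEstimates

theorem tb_solution_stays_in_box_general
    (μ β δ ω ωR σ σR τ0 τ1 τ2 N ε1 ε2 φ : ℝ)
    (hμ : 0 < μ) (hβ : 0 < β) (hδ : 0 < δ) (hω : 0 < ω) (hωR : 0 < ωR)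
    (hσ : 0 < σ) (hσR : 0 < σR) (hτ0 : 0 < τ0) (hτ1 : 0 < τ1) (hτ2 : 0 < τ2)
    (hN : 0 < N) (hε1 : 0 < ε1) (hε2 : 0 < ε2) (hφ : φ ∈ Set.Ioo (0 : ℝ) 1)
    (T : ℝ)
    (u1 u2 : ℝ → ℝ)
    (hu1 : ∀ t ∈ Set.Icc (0 : ℝ) T, u1 t ∈ Set.Icc (0 : ℝ) 1)
    (hu2 : ∀ t ∈ Set.Icc (0 : ℝ) T, u2 t ∈ Set.Icc (0 : ℝ) 1)
    (S L1 I L2 R : ℝ → ℝ)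
    (hS : ∀ t ∈ Set.Icc (0 : ℝ) T,
      HasDerivWithinAt S (μ * N - β / N * I t * S t - μ * S t) (Set.Icc (0 : ℝ) T) t)
    (hL1 : ∀ t ∈ Set.Icc (0 : ℝ) T,
      HasDerivWithinAt L1
        (β / N * I t * (S t + σ * L2 t + σR * R t) - (δ + τ1 + μ) * L1 t)
        (Set.Icc (0 : ℝ) T) t)
    (hI : ∀ t ∈ Set.Icc (0 : ℝ) T,
      HasDerivWithinAt I
        (φ * δ * L1 t + ω * L2 t + ωR * R t - (τ0 + ε1 * u1 t + μ) * I t)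
        (Set.Icc (0 : ℝ) T) t)
    (hL2 : ∀ t ∈ Set.Icc (0 : ℝ) T,
      HasDerivWithinAt L2
        ((1 - φ) * δ * L1 t - σ * (β / N) * I t * L2 t - (ω + ε2 * u2 t + τ2 + μ) * L2 t)
        (Set.Icc (0 : ℝ) T) t)
    (hR : ∀ t ∈ Set.Icc (0 : ℝ) T,
      HasDerivWithinAt R
        ((τ0 + ε1 * u1 t) * I t + τ1 * L1 t + (τ2 + ε2 * u2 t) * L2 t
          - σR * (β / N) * I t * R t - (ωR + μ) * R t)
        (Set.Icc (0 : ℝ) T) t)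
    (hS0 : 0 ≤ S 0) (hL10 : 0 ≤ L1 0) (hI0 : 0 ≤ I 0) (hL20 : 0 ≤ L2 0)
    (hR0 : 0 ≤ R 0)
    (hsum0 : S 0 + L1 0 + I 0 + L2 0 + R 0 = N) :
    ∀ t ∈ Set.Icc (0 : ℝ) T,
      S t ∈ Set.Icc (0 : ℝ) N ∧ L1 t ∈ Set.Icc (0 : ℝ) N ∧
      I t ∈ Set.Icc (0 : ℝ) N ∧ L2 t ∈ Set.Icc (0 : ℝ) N ∧
      R t ∈ Set.Icc (0 : ℝ) N := by
  obtain ⟨hφ0, hφ1⟩ := hφ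
  set x : Fin 5 → ℝ → ℝ := ![S, L1, I, L2, R]
  obtain ⟨M, hM⟩ : ∃ M, ∀ t ∈ Icc 0 T, ∀ k, |x k t| ≤ M := by
    obtain ⟨M, hM⟩ := isCompact_Icc.exists_bound_of_continuousOn (f := fun t k => x k t)
      (continuousOn_pi.2 fun k t ht => by
        fin_cases k
        exacts [(hS t ht).continuousWithinAt, (hL1 t ht).continuousWithinAt,
          (hI t ht).continuousWithinAt, (hL2 t ht).continuousWithinAt,
          (hR t ht).continuousWithinAt])
    exact ⟨M, fun t ht k => (norm_le_pi_norm _ k).trans (hM t ht)⟩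
  have hquasi : ∀ k, ∃ (K : ℝ) (x' : ℝ → ℝ), ∀ t ∈ Icc 0 T,
      HasDerivWithinAt (x k) (x' t) (Icc 0 T) t ∧ (x k t ≤ 0 → -x' t ≤ K * ∑ j, (x j t)⁻) := by
    intro k
    simp only [Fin.sum_univ_five]
    fin_cases k
    · exact ⟨_, _, fun t ht => ⟨hS t ht, tb_quasipositive_S hμ.le hβ.le hN.le (hM t ht 2)⟩⟩
    · exact ⟨_, _, fun t ht => ⟨hL1 t ht, tb_quasipositive_L1 hμ.le hβ.le hδ.le hσ.le hσR.le
        hτ1.le hN.le (hM t ht 0) (hM t ht 2) (hM t ht 3) (hM t ht 4)⟩⟩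
    · exact ⟨_, _, fun t ht => ⟨hI t ht, tb_quasipositive_I hμ.le hδ.le hω.le hωR.le hτ0.le
        hε1.le hφ0.le (hu1 t ht).1⟩⟩
    · exact ⟨_, _, fun t ht => ⟨hL2 t ht, tb_quasipositive_L2 hμ.le hβ.le hδ.le hω.le hσ.le
        hτ2.le hN.le hε2.le hφ1.le (hu2 t ht).1 (hM t ht 2)⟩⟩
    · exact ⟨_, _, fun t ht => ⟨hR t ht, tb_quasipositive_R hμ.le hβ.le hωR.le hσR.le hτ0.le
        hτ1.le hτ2.le hN.le hε1.le hε2.le (hu1 t ht) (hu2 t ht) (hM t ht 2)⟩⟩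
  choose K x' hx' using hquasi
  have hnonneg := nonneg_of_quasipositive (fun k t ht => (hx' k t ht).1)
    (fun k t ht => (hx' k t (Ico_subset_Icc_self ht)).2) (by intro k; fin_cases k <;> assumption)
  have htotal := eq_zero_of_hasDerivWithinAt_const_mul
    (W := fun t => S t + L1 t + I t + L2 t + R t - N) (c := -μ)
    (fun t ht => ((((((hS t ht).add (hL1 t ht)).add (hI t ht)).add (hL2 t ht)).add
      (hR t ht)).sub_const N).congr_deriv (by ring)) (by simp [hsum0])
  intro t ht
  have hW : S t + L1 t + I t + L2 t + R t - N = 0 := htotal t ht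
  have h0 := hnonneg t ht 0; have h1 := hnonneg t ht 1; have h2 := hnonneg t ht 2
  have h3 := hnonneg t ht 3; have h4 := hnonneg t ht 4
  simp only [x, Matrix.cons_val] at h0 h1 h2 h3 h4
  refine ⟨⟨?_, ?_⟩, ⟨?_, ?_⟩, ⟨?_, ?_⟩, ⟨?_, ?_⟩, ⟨?_, ?_⟩⟩ <;> linarith

/-- For the TB control system with continuous controls taking
values in `[0,1]`, any differentiable solution on `[0,T]` with nonnegative
initial data summing to `N` stays in `[0, N]` componentwise. -/
theorem tb_solution_stays_in_box
    (μ β δ ω ωR σ σR τ0 τ1 τ2 N ε1 ε2 φ : ℝ)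
    (hμ : 0 < μ) (hβ : 0 < β) (hδ : 0 < δ) (hω : 0 < ω) (hωR : 0 < ωR)
    (hσ : 0 < σ) (hσR : 0 < σR) (hτ0 : 0 < τ0) (hτ1 : 0 < τ1) (hτ2 : 0 < τ2)
    (hN : 0 < N) (hε1 : 0 < ε1) (hε2 : 0 < ε2) (hφ : φ ∈ Set.Ioo (0 : ℝ) 1)
    (T : ℝ) (hT : 0 < T)
    (u1 u2 : ℝ → ℝ)
    (hu1c : ContinuousOn u1 (Set.Icc (0 : ℝ) T))
    (hu2c : ContinuousOn u2 (Set.Icc (0 : ℝ) T))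
    (hu1 : ∀ t ∈ Set.Icc (0 : ℝ) T, u1 t ∈ Set.Icc (0 : ℝ) 1)
    (hu2 : ∀ t ∈ Set.Icc (0 : ℝ) T, u2 t ∈ Set.Icc (0 : ℝ) 1)
    (S L1 I L2 R : ℝ → ℝ)
    (hS : ∀ t ∈ Set.Icc (0 : ℝ) T,
      HasDerivWithinAt S (μ * N - β / N * I t * S t - μ * S t) (Set.Icc (0 : ℝ) T) t)
    (hL1 : ∀ t ∈ Set.Icc (0 : ℝ) T,
      HasDerivWithinAt L1
        (β / N * I t * (S t + σ * L2 t + σR * R t) - (δ + τ1 + μ) * L1 t)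
        (Set.Icc (0 : ℝ) T) t)
    (hI : ∀ t ∈ Set.Icc (0 : ℝ) T,
      HasDerivWithinAt I
        (φ * δ * L1 t + ω * L2 t + ωR * R t - (τ0 + ε1 * u1 t + μ) * I t)
        (Set.Icc (0 : ℝ) T) t)
    (hL2 : ∀ t ∈ Set.Icc (0 : ℝ) T,
      HasDerivWithinAt L2
        ((1 - φ) * δ * L1 t - σ * (β / N) * I t * L2 t - (ω + ε2 * u2 t + τ2 + μ) * L2 t)
        (Set.Icc (0 : ℝ) T) t)
    (hR : ∀ t ∈ Set.Icc (0 : ℝ) T,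
      HasDerivWithinAt R
        ((τ0 + ε1 * u1 t) * I t + τ1 * L1 t + (τ2 + ε2 * u2 t) * L2 t
          - σR * (β / N) * I t * R t - (ωR + μ) * R t)
        (Set.Icc (0 : ℝ) T) t)
    (hS0 : 0 ≤ S 0) (hL10 : 0 ≤ L1 0) (hI0 : 0 ≤ I 0) (hL20 : 0 ≤ L2 0)
    (hR0 : 0 ≤ R 0)
    (hsum0 : S 0 + L1 0 + I 0 + L2 0 + R 0 = N) :
    ∀ t ∈ Set.Icc (0 : ℝ) T,
      S t ∈ Set.Icc (0 : ℝ) N ∧ L1 t ∈ Set.Icc (0 : ℝ) N ∧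
      I t ∈ Set.Icc (0 : ℝ) N ∧ L2 t ∈ Set.Icc (0 : ℝ) N ∧
      R t ∈ Set.Icc (0 : ℝ) N :=
  tb_solution_stays_in_box_general μ β δ ω ωR σ σR τ0 τ1 τ2 N ε1 ε2 φ hμ hβ hδ hω hωR hσ hσR hτ0 hτ1
    hτ2 hN hε1 hε2 hφ T u1 u2 hu1 hu2 S L1 I L2 R hS hL1 hI hL2 hR hS0 hL10 hI0 hL20 hR0 hsum0
end

section
/- Let T > 0 and let u1, u2 : [0,T] → [0,1] be continuous controls. For every initial condition (S₀, L1₀, I₀, L2₀, R₀) ∈ ℝ⁵ with all entries nonnegative and S₀ + L1₀ + I₀ + L2₀ + R₀ = N, there exists a differentiable solution (S, L1, I, L2, R) : [0,T] → ℝ⁵ of the TB control system with controls u1, u2, defined on the whole interval [0,T], with (S(0), L1(0), I(0), L2(0), R(0)) = (S₀, L1₀, I₀, L2₀, R₀). -/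
/-!
Truncate the vector field by clamping every coordinate of the state into `[0, N]`. The truncated
field is bounded and globally Lipschitz in the state, uniformly for control values in `[0, 1]²`,
so Picard–Lindelöf gives a solution on all of `[0, T]`. Along it each compartment stays
nonnegative, since its derivative is nonnegative when it vanishes, and then the total population
`Q` satisfies `Q' = μ (N - Q)` while `Q ≤ N` and `Q' ≤ 0` while `Q ≥ N`, so `Q ≡ N`. Hence the
state never leaves `[0, N]⁵`, where the truncation is the identity.
-/

open Set NNReal

theorem image_nonneg_of_hasDerivWithinAt_of_nonpos {f f' : ℝ → ℝ} {a b : ℝ}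
    (hf : ∀ t ∈ Icc a b, HasDerivWithinAt f (f' t) (Icc a b) t) (ha : 0 ≤ f a)
    (hf' : ∀ t ∈ Icc a b, f t ≤ 0 → 0 ≤ f' t) : ∀ ⦃t⦄, t ∈ Icc a b → 0 ≤ f t := by
  -- `-f` can touch the barrier `r * (t - a) + r > 0` only where `f < 0`, hence `-f' ≤ 0 < r`.
  have hperturbed : ∀ r > 0, ∀ t ∈ Icc a b, -f t ≤ r * (t - a) + r := fun r hr =>
    image_le_of_deriv_right_lt_deriv_boundary' (f := fun t => -f t)
      (fun t ht => (hf t ht).continuousWithinAt.neg)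
      (fun t ht => ((hf t (Ico_subset_Icc_self ht)).mono_of_mem_nhdsWithin
        (Icc_mem_nhdsGE_of_mem ht)).neg) (by linarith) (by fun_prop)
      (fun t _ => ((hasDerivAt_id t).sub_const a).const_mul r |>.add_const r |>.hasDerivWithinAt)
      fun t ht heq => by
        have := hf' t (Ico_subset_Icc_self ht) (by nlinarith [ht.1])
        simp only [mul_one]; linarith
  intro t ht
  refine neg_nonpos.1 (le_of_forall_pos_le_add fun ε hε => ?_)
  have hta : 0 < t - a + 1 := by linarith [ht.1]
  have := hperturbed (ε / (t - a + 1)) (by positivity) t ht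
  rwa [← mul_add_one, div_mul_cancel₀ _ hta.ne', ← zero_add ε] at this

theorem exists_forall_mem_Icc_hasDerivWithinAt_of_lipschitzWith {E : Type*}
    [NormedAddCommGroup E] [NormedSpace ℝ E] [CompleteSpace E] {f : ℝ → E → E} {a b : ℝ}
    (hab : a ≤ b) {K L : ℝ≥0} (hlip : ∀ t ∈ Icc a b, LipschitzWith K (f t))
    (hcont : ∀ x, ContinuousOn (f · x) (Icc a b)) (hbdd : ∀ t ∈ Icc a b, ∀ x, ‖f t x‖ ≤ L)
    (x₀ : E) :
    ∃ α : ℝ → E, α a = x₀ ∧ ∀ t ∈ Icc a b, HasDerivWithinAt α (f t (α t)) (Icc a b) t := by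
  have hpl : IsPicardLindelof f (tmin := a) (tmax := b) ⟨a, left_mem_Icc.2 hab⟩ x₀
      (L * (b - a).toNNReal) 0 L K :=
    { lipschitzOnWith := fun t ht => (hlip t ht).lipschitzOnWith
      continuousOn := fun x _ => hcont x
      norm_le := fun t ht x _ => hbdd t ht x
      mul_max_le := by
        simp [max_eq_left (sub_nonneg.2 hab), Real.coe_toNNReal _ (sub_nonneg.2 hab)] }
  exact hpl.exists_eq_forall_mem_Icc_hasDerivWithinAt₀

theorem exists_forall_mem_Icc_hasDerivWithinAt_comp {P E : Type*}
    [NormedAddCommGroup P] [NormedAddCommGroup E] [NormedSpace ℝ E] [CompleteSpace E]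
    {F : P × E → E} (hF : LocallyLipschitz F) {W : Set P} {B : Set E} (hW : IsCompact W)
    (hB : IsCompact B) {w : ℝ → P} {a b : ℝ} (hab : a ≤ b) (hw : ContinuousOn w (Icc a b))
    (hwW : MapsTo w (Icc a b) W) {π : E → E} {Kπ : ℝ≥0} (hπ : LipschitzWith Kπ π)
    (hπB : ∀ x, π x ∈ B) (x₀ : E) :
    ∃ α : ℝ → E, α a = x₀ ∧
      ∀ t ∈ Icc a b, HasDerivWithinAt α (F (w t, π (α t))) (Icc a b) t := by
  have hWB : IsCompact (W ×ˢ B) := hW.prod hB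
  obtain ⟨K, hK⟩ := (hF.locallyLipschitzOn (s := W ×ˢ B)).exists_lipschitzOnWith_of_compact hWB
  obtain ⟨L, hL⟩ := hWB.exists_bound_of_continuousOn hF.continuous.continuousOn
  refine exists_forall_mem_Icc_hasDerivWithinAt_of_lipschitzWith (K := K * max 0 Kπ)
    (L := L.toNNReal) (f := fun t x => F (w t, π x)) hab (fun t ht => ?_) (fun x => ?_)
    (fun t ht x => ?_) x₀
  · rw [← lipschitzOnWith_univ]
    exact hK.comp ((LipschitzWith.const (w t)).prodMk hπ).lipschitzOnWith
      fun x _ => ⟨hwW ht, hπB x⟩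
  · exact hF.continuous.comp_continuousOn (hw.prodMk continuousOn_const)
  · exact (hL _ ⟨hwW ht, hπB x⟩).trans (Real.le_coe_toNNReal L)

def clampBox {ι : Type*} (N : ℝ) (x : ι → ℝ) : ι → ℝ := fun i => max 0 (min (x i) N)

section
variable {ι : Type*} {N : ℝ} {x : ι → ℝ}

theorem lipschitzWith_clampBox [Fintype ι] (N : ℝ) : LipschitzWith 1 (clampBox (ι := ι) N) :=
  LipschitzWith.mk_one fun x y => (dist_pi_le_iff dist_nonneg).2 fun i =>
    calc dist (clampBox N x i) (clampBox N y i) ≤ dist (x i) (y i) := by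
          simpa [clampBox] using
            ((LipschitzWith.id.min_const N).const_max 0).dist_le_mul (x i) (y i)
      _ ≤ dist x y := dist_le_pi_dist x y i

theorem clampBox_mem_pi (hN : 0 ≤ N) (x : ι → ℝ) : clampBox N x ∈ univ.pi fun _ => Icc 0 N :=
  fun _ _ => ⟨le_max_left _ _, max_le hN (min_le_right _ _)⟩

theorem clampBox_nonneg (x : ι → ℝ) : 0 ≤ clampBox N x := fun _ => le_max_left _ _

theorem clampBox_apply_eq_zero {i : ι} (hx : x i ≤ 0) : clampBox N x i = 0 :=
  max_eq_left ((min_le_left _ _).trans hx)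

theorem clampBox_eq_self (hx : ∀ i, x i ∈ Icc 0 N) : clampBox N x = x :=
  funext fun i => by simp [clampBox, (hx i).1, (hx i).2]

theorem clampBox_eq_self_of_sum_eq [Fintype ι] (hx : 0 ≤ x) (hsum : ∑ i, x i = N) :
    clampBox N x = x :=
  clampBox_eq_self fun j =>
    ⟨hx j, hsum ▸ Finset.single_le_sum (fun k _ => hx k) (Finset.mem_univ j)⟩

theorem clampBox_le (hx : 0 ≤ x) : clampBox N x ≤ x :=
  fun i => max_le (hx i) (min_le_left _ _)

theorem min_sum_le_sum_clampBox [Fintype ι] (hx : 0 ≤ x) :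
    min (∑ i, x i) N ≤ ∑ i, clampBox N x i := by
  by_cases h : ∀ i, x i ≤ N
  · rw [clampBox_eq_self fun i => ⟨hx i, h i⟩]
    exact min_le_left _ _
  · push Not at h
    obtain ⟨j, hj⟩ := h
    calc min (∑ i, x i) N ≤ clampBox N x j := by simp [clampBox, hj.le]
      _ ≤ ∑ i, clampBox N x i :=
        Finset.single_le_sum (fun i _ => clampBox_nonneg x i) (Finset.mem_univ j)
end

theorem sum_eq_of_hasDerivWithinAt_sum_clampBox {ι : Type*} [Fintype ι] {x : ℝ → ι → ℝ}
    {a b μ N : ℝ} (hμ : 0 ≤ μ) (hx : ∀ t ∈ Icc a b, 0 ≤ x t) (ha : ∑ i, x a i = N)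
    (hderiv : ∀ t ∈ Icc a b, HasDerivWithinAt (fun s => ∑ i, x s i)
      (μ * N - μ * ∑ i, clampBox N (x t) i) (Icc a b) t) :
    ∀ t ∈ Icc a b, ∑ i, x t i = N := by
  intro t ht
  have hge := image_nonneg_of_hasDerivWithinAt_of_nonpos (fun s hs => (hderiv s hs).sub_const N)
    (by simp [ha]) (fun s hs hle => by
      have : ∑ i, clampBox N (x s) i ≤ N :=
        (Finset.sum_le_sum fun i _ => clampBox_le (hx s hs) i).trans (sub_nonpos.1 hle)
      nlinarith) ht
  have hle := image_nonneg_of_hasDerivWithinAt_of_nonpos (fun s hs => (hderiv s hs).const_sub N)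
    (by simp [ha]) (fun s hs hle => by
      have : N ≤ ∑ i, clampBox N (x s) i := by
        simpa [min_eq_right (sub_nonpos.1 hle)] using min_sum_le_sum_clampBox (N := N) (hx s hs)
      nlinarith) ht
  linarith

section
variable (μ β δ ω ωR σ σR τ0 τ1 τ2 N ε1 ε2 φ : ℝ)

/-- The right-hand side of the TB system at control values `v = (u1, u2)`, the state being
`x = (S, L1, I, L2, R)` indexed by `0, …, 4`. -/
noncomputable def tbField (v : ℝ × ℝ) (x : Fin 5 → ℝ) : Fin 5 → ℝ :=
  ![μ * N - β / N * x 2 * x 0 - μ * x 0,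
    β / N * x 2 * (x 0 + σ * x 3 + σR * x 4) - (δ + τ1 + μ) * x 1,
    φ * δ * x 1 + ω * x 3 + ωR * x 4 - (τ0 + ε1 * v.1 + μ) * x 2,
    (1 - φ) * δ * x 1 - σ * (β / N) * x 2 * x 3 - (ω + ε2 * v.2 + τ2 + μ) * x 3,
    (τ0 + ε1 * v.1) * x 2 + τ1 * x 1 + (τ2 + ε2 * v.2) * x 3 - σR * (β / N) * x 2 * x 4
      - (ωR + μ) * x 4]

theorem contDiff_tbField {n : WithTop ℕ∞} : ContDiff ℝ n fun p : (ℝ × ℝ) × (Fin 5 → ℝ) =>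
    tbField μ β δ ω ωR σ σR τ0 τ1 τ2 N ε1 ε2 φ p.1 p.2 := by
  refine contDiff_pi.2 fun i => ?_
  fin_cases i <;> simp [tbField] <;> fun_prop

theorem sum_tbField (v : ℝ × ℝ) (x : Fin 5 → ℝ) :
    ∑ i, tbField μ β δ ω ωR σ σR τ0 τ1 τ2 N ε1 ε2 φ v x i = μ * N - μ * ∑ i, x i := by
  simp [tbField, Fin.sum_univ_five]
  ring

variable {μ β δ ω ωR σ σR τ0 τ1 τ2 N ε1 ε2 φ}

theorem tbField_nonneg_of_eq_zero (hμ : 0 ≤ μ) (hβ : 0 ≤ β) (hδ : 0 ≤ δ) (hω : 0 ≤ ω)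
    (hωR : 0 ≤ ωR) (hσ : 0 ≤ σ) (hσR : 0 ≤ σR) (hτ0 : 0 ≤ τ0) (hτ1 : 0 ≤ τ1) (hτ2 : 0 ≤ τ2)
    (hN : 0 ≤ N) (hε1 : 0 ≤ ε1) (hε2 : 0 ≤ ε2) (hφ : φ ∈ Icc 0 1) {v : ℝ × ℝ} (hv : 0 ≤ v)
    {x : Fin 5 → ℝ} (hx : 0 ≤ x) {i : Fin 5} (hi : x i = 0) :
    0 ≤ tbField μ β δ ω ωR σ σR τ0 τ1 τ2 N ε1 ε2 φ v x i := by
  have := hx 0; have := hx 1; have := hx 2; have := hx 3; have := hx 4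
  have := hv.1; have := hv.2; have := hφ.1; have := sub_nonneg.2 hφ.2
  fin_cases i <;> simp_all [tbField] <;> positivity
end

/-- For the TB control system with continuous controls taking
values in `[0,1]`, and any nonnegative initial condition summing to `N`,
there exists a differentiable solution defined on the whole interval `[0,T]`
with the prescribed initial values. -/
theorem tb_solution_exists_globally
    (μ β δ ω ωR σ σR τ0 τ1 τ2 N ε1 ε2 φ : ℝ)
    (hμ : 0 < μ) (hβ : 0 < β) (hδ : 0 < δ) (hω : 0 < ω) (hωR : 0 < ωR)
    (hσ : 0 < σ) (hσR : 0 < σR) (hτ0 : 0 < τ0) (hτ1 : 0 < τ1) (hτ2 : 0 < τ2)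
    (hN : 0 < N) (hε1 : 0 < ε1) (hε2 : 0 < ε2) (hφ : φ ∈ Set.Ioo (0 : ℝ) 1)
    (T : ℝ) (hT : 0 < T)
    (u1 u2 : ℝ → ℝ)
    (hu1c : ContinuousOn u1 (Set.Icc (0 : ℝ) T))
    (hu2c : ContinuousOn u2 (Set.Icc (0 : ℝ) T))
    (hu1 : ∀ t ∈ Set.Icc (0 : ℝ) T, u1 t ∈ Set.Icc (0 : ℝ) 1)
    (hu2 : ∀ t ∈ Set.Icc (0 : ℝ) T, u2 t ∈ Set.Icc (0 : ℝ) 1)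
    (S0 L10 I0 L20 R0 : ℝ)
    (hS0 : 0 ≤ S0) (hL10 : 0 ≤ L10) (hI0 : 0 ≤ I0) (hL20 : 0 ≤ L20)
    (hR0 : 0 ≤ R0) (hsum0 : S0 + L10 + I0 + L20 + R0 = N) :
    ∃ S L1 I L2 R : ℝ → ℝ,
      (∀ t ∈ Set.Icc (0 : ℝ) T,
        HasDerivWithinAt S (μ * N - β / N * I t * S t - μ * S t)
          (Set.Icc (0 : ℝ) T) t) ∧
      (∀ t ∈ Set.Icc (0 : ℝ) T,
        HasDerivWithinAt L1
          (β / N * I t * (S t + σ * L2 t + σR * R t) - (δ + τ1 + μ) * L1 t)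
          (Set.Icc (0 : ℝ) T) t) ∧
      (∀ t ∈ Set.Icc (0 : ℝ) T,
        HasDerivWithinAt I
          (φ * δ * L1 t + ω * L2 t + ωR * R t - (τ0 + ε1 * u1 t + μ) * I t)
          (Set.Icc (0 : ℝ) T) t) ∧
      (∀ t ∈ Set.Icc (0 : ℝ) T,
        HasDerivWithinAt L2
          ((1 - φ) * δ * L1 t - σ * (β / N) * I t * L2 t
            - (ω + ε2 * u2 t + τ2 + μ) * L2 t)
          (Set.Icc (0 : ℝ) T) t) ∧
      (∀ t ∈ Set.Icc (0 : ℝ) T,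
        HasDerivWithinAt R
          ((τ0 + ε1 * u1 t) * I t + τ1 * L1 t + (τ2 + ε2 * u2 t) * L2 t
            - σR * (β / N) * I t * R t - (ωR + μ) * R t)
          (Set.Icc (0 : ℝ) T) t) ∧
      S 0 = S0 ∧ L1 0 = L10 ∧ I 0 = I0 ∧ L2 0 = L20 ∧ R 0 = R0 := by
  set F := tbField μ β δ ω ωR σ σR τ0 τ1 τ2 N ε1 ε2 φ
  obtain ⟨x, hx0, hx⟩ := exists_forall_mem_Icc_hasDerivWithinAt_comp (F := fun p => F p.1 p.2)
    ((contDiff_tbField ..).locallyLipschitz) (isCompact_Icc.prod isCompact_Icc)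
    (isCompact_univ_pi fun _ => isCompact_Icc) hT.le (hu1c.prodMk hu2c)
    (fun t ht => ⟨hu1 t ht, hu2 t ht⟩) (lipschitzWith_clampBox N) (clampBox_mem_pi hN.le)
    ![S0, L10, I0, L20, R0]
  have hxi : ∀ i, ∀ t ∈ Icc 0 T, HasDerivWithinAt (x · i)
      (F (u1 t, u2 t) (clampBox N (x t)) i) (Icc 0 T) t :=
    fun i t ht => hasDerivWithinAt_pi.1 (hx t ht) i
  have hnonneg : ∀ t ∈ Icc 0 T, 0 ≤ x t := fun t ht i =>
    image_nonneg_of_hasDerivWithinAt_of_nonpos (hxi i) (by rw [hx0]; fin_cases i <;> assumption)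
      (fun s hs hxs => tbField_nonneg_of_eq_zero hμ.le hβ.le hδ.le hω.le hωR.le hσ.le hσR.le
        hτ0.le hτ1.le hτ2.le hN.le hε1.le hε2.le (Ioo_subset_Icc_self hφ)
        ⟨(hu1 s hs).1, (hu2 s hs).1⟩ (clampBox_nonneg _) (clampBox_apply_eq_zero hxs)) ht
  have hsum : ∀ t ∈ Icc 0 T, ∑ i, x t i = N :=
    sum_eq_of_hasDerivWithinAt_sum_clampBox hμ.le hnonneg
      (by simp [hx0, Fin.sum_univ_five, ← hsum0]) fun t ht => by
        simpa [F, sum_tbField] using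
          HasDerivWithinAt.fun_sum (u := Finset.univ) fun i _ => hxi i t ht
  have hsol : ∀ i, ∀ t ∈ Icc 0 T, HasDerivWithinAt (x · i) (F (u1 t, u2 t) (x t) i)
      (Icc 0 T) t := by
    intro i t ht
    simpa [clampBox_eq_self_of_sum_eq (hnonneg t ht) (hsum t ht)] using hxi i t ht
  exact ⟨(x · 0), (x · 1), (x · 2), (x · 3), (x · 4), hsol 0, hsol 1, hsol 2, hsol 3, hsol 4,
    by simp [hx0]⟩
end
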